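/- arXiv:math/0701779 — 6 statements merged into one kernel-verified Lean document; each statement's English description precedes it below -/
import Mathlib

section
/- Let n ≥ 3, 2 ≤ k ≤ n−1, and let f̃, g̃ be continuous functions on [0,1]. Define R̃_k(f̃)(s) = c_k ∫₀¹ f̃(st)(1−t²)^((k−3)/2) dt and R̃*_k(g̃)(t) = e_{n,k} ∫₀¹ g̃(√(1−s²(1−t²)))(1−s²)^((k−3)/2) s^{n−k−1} ds, with c_k, e_{n,k} > 0 the constants making R̃_k(1)=1 and R̃*_k(1)=1. Then there exists a constant d_{n,k} > 0 such that ∫₀¹ R̃*_k(g̃)(t) f̃(t) (1−t²)^((n−3)/2) dt = d_{n,k} ∫₀¹ g̃(s) R̃_k(f̃)(s) (1−s²)^((n−k−2)/2) s^{k−1} ds. -/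
open MeasureTheory Set

/-!
Put `a = (k - 3) / 2` and `b = (n - k - 2) / 2`, so that `a, b > -1`. Up to the factor `e / c`,
both sides equal the integral of `f t * g r * (r² - t²) ^ a * (1 - r²) ^ b * r` over the
triangle `0 < t < r < 1`. Integrating first in `r` and substituting `r = √(1 - s² (1 - t²))`,
for which `r² - t² = (1 - t²)(1 - s²)`, `1 - r² = (1 - t²) s²` and `r dr = -(1 - t²) s ds`,
gives the left side; integrating first in `t` and substituting `t = r u` gives the right side.
Fubini applies because the kernel is integrable on the unit square and `f`, `g` are bounded.
-/

theorem integrableOn_rpow_mul_one_sub_rpow {p q : ℝ} (hp : -1 < p) (hq : -1 < q) :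
    IntegrableOn (fun x : ℝ => x ^ p * (1 - x) ^ q) (Ioo 0 1) := by
  have hβ := (Complex.betaIntegral_convergent (u := p + 1) (v := q + 1)
    (by simp; linarith) (by simp; linarith)).norm
  rw [intervalIntegrable_iff_integrableOn_Ioo_of_le zero_le_one] at hβ
  refine hβ.congr_fun (fun x hx => ?_) measurableSet_Ioo
  have h1x : ((1 : ℂ) - x) = ((1 - x : ℝ) : ℂ) := by push_cast; ring
  dsimp only
  rw [norm_mul, Complex.norm_cpow_eq_rpow_re_of_pos hx.1, h1x,
    Complex.norm_cpow_eq_rpow_re_of_pos (by linarith [hx.2])]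
  simp

theorem integrableOn_one_sub_sq_rpow_mul_rpow {a q : ℝ} (ha : -1 < a) (hq : -1 < q) :
    IntegrableOn (fun s : ℝ => (1 - s ^ 2) ^ a * s ^ q) (Ioo 0 1) := by
  have hbound : ∀ s ∈ Ioo (0 : ℝ) 1, ‖(1 + s) ^ a‖ ≤ 2 ^ |a| := fun s hs => by
    rw [Real.norm_of_nonneg (Real.rpow_nonneg (by linarith [hs.1]) a)]
    calc (1 + s) ^ a ≤ (1 + s) ^ |a| :=
          Real.rpow_le_rpow_of_exponent_le (by linarith [hs.1]) (le_abs_self a)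
      _ ≤ 2 ^ |a| := Real.rpow_le_rpow (by linarith [hs.1]) (by linarith [hs.2]) (abs_nonneg a)
  refine IntegrableOn.congr_fun ((integrableOn_rpow_mul_one_sub_rpow hq ha).bdd_mul
    ((measurable_id.const_add 1).pow_const a).aestronglyMeasurable
    ((ae_restrict_iff' measurableSet_Ioo).2 (ae_of_all _ hbound))) (fun s hs => ?_)
    measurableSet_Ioo
  rw [show 1 - s ^ 2 = (1 + s) * (1 - s) by ring,
    Real.mul_rpow (by linarith [hs.1]) (by linarith [hs.2])]
  simp only [id]
  ring

theorem hasDerivAt_sqrt_one_sub_sq_mul {c s : ℝ} (h : 0 < 1 - s ^ 2 * c) :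
    HasDerivAt (fun s => Real.sqrt (1 - s ^ 2 * c))
      (-(s * c) / Real.sqrt (1 - s ^ 2 * c)) s := by
  convert ((((hasDerivAt_pow 2 s).mul_const c).const_sub 1).sqrt h.ne') using 1
  field_simp
  ring

theorem strictAntiOn_sqrt_one_sub_sq_mul {t : ℝ} (ht : t ^ 2 < 1) :
    StrictAntiOn (fun s => Real.sqrt (1 - s ^ 2 * (1 - t ^ 2))) (Icc 0 1) := by
  intro x hx y hy hxy
  apply Real.sqrt_lt_sqrt
  · nlinarith [hy.2, hy.1]
  · have hsq : x ^ 2 < y ^ 2 := by nlinarith [hx.1]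
    nlinarith [mul_lt_mul_of_pos_right hsq (sub_pos.2 ht)]

theorem hasDerivWithinAt_sqrt_one_sub_sq_mul_Ioo (t : ℝ) :
    ∀ s ∈ Ioo (0 : ℝ) 1, HasDerivWithinAt (fun s => Real.sqrt (1 - s ^ 2 * (1 - t ^ 2)))
      (-(s * (1 - t ^ 2)) / Real.sqrt (1 - s ^ 2 * (1 - t ^ 2))) (Ioo 0 1) s := fun s hs =>
  (hasDerivAt_sqrt_one_sub_sq_mul (by nlinarith [hs.1, hs.2])).hasDerivWithinAt

theorem injOn_sqrt_one_sub_sq_mul_Ioo {t : ℝ} (ht : t ∈ Ioo 0 1) :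
    InjOn (fun s => Real.sqrt (1 - s ^ 2 * (1 - t ^ 2))) (Ioo 0 1) :=
  (strictAntiOn_sqrt_one_sub_sq_mul (by nlinarith [ht.1, ht.2])).injOn.mono Ioo_subset_Icc_self

theorem image_sqrt_one_sub_sq_mul_Ioo {t : ℝ} (ht : t ∈ Ioo 0 1) :
    (fun s => Real.sqrt (1 - s ^ 2 * (1 - t ^ 2))) '' Ioo 0 1 = Ioo t 1 := by
  rw [ContinuousOn.image_Ioo_of_strictAntiOn zero_le_one (by fun_prop)
    (strictAntiOn_sqrt_one_sub_sq_mul (by nlinarith [ht.1, ht.2]))]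
  simp [Real.sqrt_sq ht.1.le]

theorem eqOn_abs_deriv_smul_comp_sqrt {t : ℝ} (ht : t ∈ Ioo 0 1) (h : ℝ → ℝ) :
    EqOn (fun s => |-(s * (1 - t ^ 2)) / Real.sqrt (1 - s ^ 2 * (1 - t ^ 2))| •
        (h (Real.sqrt (1 - s ^ 2 * (1 - t ^ 2))) * Real.sqrt (1 - s ^ 2 * (1 - t ^ 2))))
      (fun s => (1 - t ^ 2) * (h (Real.sqrt (1 - s ^ 2 * (1 - t ^ 2))) * s)) (Ioo 0 1) := by
  intro s hs
  have hpos : 0 < Real.sqrt (1 - s ^ 2 * (1 - t ^ 2)) :=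
    Real.sqrt_pos.2 (by nlinarith [ht.1, ht.2, hs.1, hs.2])
  dsimp only
  rw [smul_eq_mul, abs_div, abs_neg, abs_of_pos hpos,
    abs_of_pos (mul_pos hs.1 (by nlinarith [ht.1, ht.2]))]
  field_simp

theorem setIntegral_Ioo_mul_self_eq_comp_sqrt {t : ℝ} (ht : t ∈ Ioo 0 1) (h : ℝ → ℝ) :
    ∫ r in Ioo t 1, h r * r
      = (1 - t ^ 2) * ∫ s in Ioo 0 1, h (Real.sqrt (1 - s ^ 2 * (1 - t ^ 2))) * s := by
  rw [← image_sqrt_one_sub_sq_mul_Ioo ht, integral_image_eq_integral_abs_deriv_smul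
    measurableSet_Ioo (hasDerivWithinAt_sqrt_one_sub_sq_mul_Ioo t)
    (injOn_sqrt_one_sub_sq_mul_Ioo ht),
    setIntegral_congr_fun measurableSet_Ioo (eqOn_abs_deriv_smul_comp_sqrt ht h),
    integral_const_mul]

theorem integrableOn_Ioo_mul_self_iff_comp_sqrt {t : ℝ} (ht : t ∈ Ioo 0 1) (h : ℝ → ℝ) :
    IntegrableOn (fun r => h r * r) (Ioo t 1)
      ↔ IntegrableOn (fun s => h (Real.sqrt (1 - s ^ 2 * (1 - t ^ 2))) * s) (Ioo 0 1) := by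
  rw [← image_sqrt_one_sub_sq_mul_Ioo ht, integrableOn_image_iff_integrableOn_abs_deriv_smul
    measurableSet_Ioo (hasDerivWithinAt_sqrt_one_sub_sq_mul_Ioo t)
    (injOn_sqrt_one_sub_sq_mul_Ioo ht),
    integrableOn_congr_fun (eqOn_abs_deriv_smul_comp_sqrt ht h) measurableSet_Ioo]
  exact integrable_const_mul_iff (Ne.isUnit (by nlinarith [ht.1, ht.2])) _

theorem setIntegral_Ioo_zero_eq_mul_comp_mul {r : ℝ} (hr : 0 < r) (f : ℝ → ℝ) :
    ∫ u in Ioo 0 r, f u = r * ∫ t in Ioo 0 1, f (r * t) := by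
  have := Measure.setIntegral_comp_smul_of_pos volume f (Ioo 0 1) hr
  simp only [smul_eq_mul, LinearOrderedField.smul_Ioo hr, mul_zero, mul_one,
    Module.finrank_self, pow_one] at this
  rw [this, mul_inv_cancel_left₀ hr.ne']

theorem rpow_mul_rpow_comp_sqrt_one_sub_sq_mul {t s : ℝ} (a b : ℝ) (ht : t ∈ Ioo 0 1)
    (hs : s ∈ Ioo 0 1) :
    (Real.sqrt (1 - s ^ 2 * (1 - t ^ 2)) ^ 2 - t ^ 2) ^ a *
        (1 - Real.sqrt (1 - s ^ 2 * (1 - t ^ 2)) ^ 2) ^ b * s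
      = (1 - t ^ 2) ^ (a + b) * ((1 - s ^ 2) ^ a * s ^ (2 * b + 1)) := by
  have h1t : 0 < 1 - t ^ 2 := by nlinarith [ht.1, ht.2]
  rw [Real.sq_sqrt (by nlinarith [hs.1, hs.2]),
    show 1 - s ^ 2 * (1 - t ^ 2) - t ^ 2 = (1 - t ^ 2) * (1 - s ^ 2) by ring,
    show 1 - (1 - s ^ 2 * (1 - t ^ 2)) = (1 - t ^ 2) * s ^ 2 by ring,
    Real.mul_rpow h1t.le (by nlinarith [hs.1, hs.2]), Real.mul_rpow h1t.le (sq_nonneg s),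
    Real.rpow_add h1t, Real.rpow_add hs.1, Real.rpow_one, ← Real.rpow_natCast_mul hs.1.le]
  push_cast
  ring

noncomputable def dualityKernel (a b : ℝ) (p : ℝ × ℝ) : ℝ :=
  if p.1 < p.2 then (p.2 ^ 2 - p.1 ^ 2) ^ a * (1 - p.2 ^ 2) ^ b * p.2 else 0

theorem dualityKernel_nonneg (a b : ℝ) {p : ℝ × ℝ} (h1 : 0 ≤ p.1) (h2 : p.2 ≤ 1) :
    0 ≤ dualityKernel a b p := by
  unfold dualityKernel
  split_ifs with h
  · have : 0 ≤ p.2 ^ 2 - p.1 ^ 2 := by nlinarith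
    have : 0 ≤ 1 - p.2 ^ 2 := by nlinarith
    have : 0 ≤ p.2 := by linarith
    positivity
  · rfl

theorem measurable_dualityKernel (a b : ℝ) : Measurable (dualityKernel a b) :=
  Measurable.ite (measurableSet_lt measurable_fst measurable_snd) (by fun_prop) measurable_const

theorem setIntegral_mul_dualityKernel_right (a b : ℝ) {t : ℝ} (ht : t ∈ Ioo 0 1)
    (G : ℝ → ℝ) :
    ∫ r in Ioo 0 1, G r * dualityKernel a b (t, r)
      = (1 - t ^ 2) ^ (a + b + 1) * ∫ s in Ioo 0 1,
          G (Real.sqrt (1 - s ^ 2 * (1 - t ^ 2))) * (1 - s ^ 2) ^ a * s ^ (2 * b + 1) := by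
  have h1t : 0 < 1 - t ^ 2 := by nlinarith [ht.1, ht.2]
  calc ∫ r in Ioo 0 1, G r * dualityKernel a b (t, r)
      = ∫ r in Ioo t 1, G r * dualityKernel a b (t, r) :=
        setIntegral_eq_of_subset_of_forall_sdiff_eq_zero measurableSet_Ioo
          (Ioo_subset_Ioo_left ht.1.le) fun r hr => by
            rw [dualityKernel, if_neg fun h => hr.2 ⟨h, hr.1.2⟩, mul_zero]
    _ = ∫ r in Ioo t 1, (G r * (r ^ 2 - t ^ 2) ^ a * (1 - r ^ 2) ^ b) * r :=
        setIntegral_congr_fun measurableSet_Ioo fun r hr => by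
          simp only [dualityKernel, if_pos hr.1]
          ring
    _ = (1 - t ^ 2) * ∫ s in Ioo 0 1, (1 - t ^ 2) ^ (a + b) *
          (G (Real.sqrt (1 - s ^ 2 * (1 - t ^ 2))) * (1 - s ^ 2) ^ a * s ^ (2 * b + 1)) := by
        rw [setIntegral_Ioo_mul_self_eq_comp_sqrt ht]
        congr 1
        refine setIntegral_congr_fun measurableSet_Ioo fun s hs => ?_
        linear_combination G (Real.sqrt (1 - s ^ 2 * (1 - t ^ 2))) *
          rpow_mul_rpow_comp_sqrt_one_sub_sq_mul a b ht hs
    _ = _ := by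
        rw [integral_const_mul, ← mul_assoc, Real.rpow_add_one h1t.ne']
        ring

theorem setIntegral_mul_dualityKernel_left (a b : ℝ) {r : ℝ} (hr : r ∈ Ioo 0 1)
    (F : ℝ → ℝ) :
    ∫ t in Ioo 0 1, F t * dualityKernel a b (t, r)
      = (1 - r ^ 2) ^ b * r ^ (2 * a + 2) * ∫ t in Ioo 0 1, F (r * t) * (1 - t ^ 2) ^ a := by
  calc ∫ t in Ioo 0 1, F t * dualityKernel a b (t, r)
      = ∫ t in Ioo 0 r, F t * dualityKernel a b (t, r) :=
        setIntegral_eq_of_subset_of_forall_sdiff_eq_zero measurableSet_Ioo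
          (Ioo_subset_Ioo_right hr.2.le) fun t ht => by
            rw [dualityKernel, if_neg fun h => ht.2 ⟨ht.1.1, h⟩, mul_zero]
    _ = (1 - r ^ 2) ^ b * r * ∫ t in Ioo 0 r, F t * (r ^ 2 - t ^ 2) ^ a := by
        rw [← integral_const_mul]
        refine setIntegral_congr_fun measurableSet_Ioo fun t ht => ?_
        simp only [dualityKernel, if_pos ht.2]
        ring
    _ = (1 - r ^ 2) ^ b * r *
          (r * ∫ t in Ioo 0 1, r ^ (2 * a) * (F (r * t) * (1 - t ^ 2) ^ a)) := by
        rw [setIntegral_Ioo_zero_eq_mul_comp_mul hr.1]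
        congr 2
        refine setIntegral_congr_fun measurableSet_Ioo fun t ht => ?_
        rw [show r ^ 2 - (r * t) ^ 2 = r ^ 2 * (1 - t ^ 2) by ring,
          Real.mul_rpow (sq_nonneg r) (by nlinarith [ht.1, ht.2]),
          ← Real.rpow_natCast_mul hr.1.le]
        push_cast
        ring
    _ = _ := by
        rw [integral_const_mul, show 2 * a + 2 = 2 * a + 1 + 1 by ring,
          Real.rpow_add_one hr.1.ne', Real.rpow_add_one hr.1.ne']
        ring

theorem integrableOn_dualityKernel_right {a b : ℝ} (ha : -1 < a) (hb : -1 < b) {t : ℝ}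
    (ht : t ∈ Ioo 0 1) : IntegrableOn (fun r => dualityKernel a b (t, r)) (Ioo 0 1) := by
  have hslice : IntegrableOn (fun r => (r ^ 2 - t ^ 2) ^ a * (1 - r ^ 2) ^ b * r) (Ioo t 1) := by
    rw [integrableOn_Ioo_mul_self_iff_comp_sqrt ht (fun r => (r ^ 2 - t ^ 2) ^ a * (1 - r ^ 2) ^ b)]
    refine IntegrableOn.congr_fun ((integrableOn_one_sub_sq_rpow_mul_rpow ha
      (by linarith : -1 < 2 * b + 1)).const_mul ((1 - t ^ 2) ^ (a + b))) (fun s hs => ?_)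
      measurableSet_Ioo
    exact (rpow_mul_rpow_comp_sqrt_one_sub_sq_mul a b ht hs).symm
  refine (hslice.congr_fun (fun r hr => ?_) measurableSet_Ioo).of_forall_sdiff_eq_zero
    measurableSet_Ioo fun r hr => ?_
  · simp only [dualityKernel, if_pos hr.1]
  · rw [dualityKernel, if_neg fun h => hr.2 ⟨h, hr.1.2⟩]

theorem integrable_dualityKernel {a b : ℝ} (ha : -1 < a) (hb : -1 < b) :
    Integrable (dualityKernel a b)
      ((volume.restrict (Ioo 0 1)).prod (volume.restrict (Ioo 0 1))) := by
  rw [integrable_prod_iff (measurable_dualityKernel a b).aestronglyMeasurable]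
  refine ⟨ae_restrict_of_forall_mem measurableSet_Ioo fun t ht =>
    integrableOn_dualityKernel_right ha hb ht, ?_⟩
  refine IntegrableOn.congr_fun ((integrableOn_one_sub_sq_rpow_mul_rpow
    (by linarith : -1 < a + b + 1) neg_one_lt_zero).mul_const
      (∫ s in Ioo 0 1, (1 - s ^ 2) ^ a * s ^ (2 * b + 1))) (fun t ht => ?_) measurableSet_Ioo
  have hslice := setIntegral_mul_dualityKernel_right a b ht fun _ => 1
  simp only [one_mul] at hslice
  rw [Real.rpow_zero, mul_one, ← hslice]
  exact setIntegral_congr_fun measurableSet_Ioo fun r hr =>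
    (Real.norm_of_nonneg (dualityKernel_nonneg a b (p := (t, r)) ht.1.le hr.2.le)).symm

theorem integrable_mul_mul_dualityKernel {a b CF CG : ℝ} (ha : -1 < a) (hb : -1 < b)
    {F G : ℝ → ℝ} (hF : AEStronglyMeasurable F (volume.restrict (Ioo 0 1)))
    (hFb : ∀ᵐ t ∂volume.restrict (Ioo 0 1), ‖F t‖ ≤ CF)
    (hG : AEStronglyMeasurable G (volume.restrict (Ioo 0 1)))
    (hGb : ∀ᵐ r ∂volume.restrict (Ioo 0 1), ‖G r‖ ≤ CG) :
    Integrable (fun p : ℝ × ℝ => F p.1 * G p.2 * dualityKernel a b p)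
      ((volume.restrict (Ioo 0 1)).prod (volume.restrict (Ioo 0 1))) := by
  refine (integrable_dualityKernel ha hb).bdd_mul (c := CF * CG)
    (hF.comp_fst.mul hG.comp_snd) ?_
  filter_upwards [Measure.quasiMeasurePreserving_fst.ae hFb,
    Measure.quasiMeasurePreserving_snd.ae hGb] with p hp1 hp2
  exact norm_mul_le_of_le hp1 hp2

theorem integral_dualRadon_mul_eq_integral_mul_radon {a b CF CG : ℝ} (ha : -1 < a)
    (hb : -1 < b) {F G : ℝ → ℝ} (hF : AEStronglyMeasurable F (volume.restrict (Ioo 0 1)))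
    (hFb : ∀ᵐ t ∂volume.restrict (Ioo 0 1), ‖F t‖ ≤ CF)
    (hG : AEStronglyMeasurable G (volume.restrict (Ioo 0 1)))
    (hGb : ∀ᵐ r ∂volume.restrict (Ioo 0 1), ‖G r‖ ≤ CG) :
    ∫ t in (0 : ℝ)..1, (∫ s in (0 : ℝ)..1,
        G (Real.sqrt (1 - s ^ 2 * (1 - t ^ 2))) * (1 - s ^ 2) ^ a * s ^ (2 * b + 1)) *
          F t * (1 - t ^ 2) ^ (a + b + 1)
      = ∫ s in (0 : ℝ)..1, G s * (∫ t in (0 : ℝ)..1, F (s * t) * (1 - t ^ 2) ^ a) *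
          (1 - s ^ 2) ^ b * s ^ (2 * a + 2) := by
  simp only [intervalIntegral.integral_of_le zero_le_one, integral_Ioc_eq_integral_Ioo]
  calc _ = ∫ t in Ioo 0 1, ∫ r in Ioo 0 1, F t * G r * dualityKernel a b (t, r) :=
        setIntegral_congr_fun measurableSet_Ioo fun t ht => by
          simp only [mul_assoc (F t), integral_const_mul,
            setIntegral_mul_dualityKernel_right a b ht]
          ring
    _ = ∫ r in Ioo 0 1, ∫ t in Ioo 0 1, F t * G r * dualityKernel a b (t, r) :=
        integral_integral_swap (integrable_mul_mul_dualityKernel ha hb hF hFb hG hGb)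
    _ = _ := setIntegral_congr_fun measurableSet_Ioo fun r hr => by
          simp only [mul_comm (F _) (G r), mul_assoc (G r), integral_const_mul,
            setIntegral_mul_dualityKernel_left a b hr]
          ring

theorem stmt1_general (n k : ℕ) (hk2 : 2 ≤ k) (hk : k ≤ n - 1)
    (f g : ℝ → ℝ) (hf : ContinuousOn f (Icc 0 1)) (hg : ContinuousOn g (Icc 0 1))
    (c e : ℝ) (hcpos : 0 < c) (hepos : 0 < e) :
    ∃ d : ℝ, 0 < d ∧
      (∫ t in (0:ℝ)..1,
          (e * ∫ s in (0:ℝ)..1,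
              g (Real.sqrt (1 - s ^ 2 * (1 - t ^ 2))) *
                (1 - s ^ 2) ^ (((k : ℝ) - 3) / 2) * s ^ ((n : ℝ) - (k : ℝ) - 1)) *
            f t * (1 - t ^ 2) ^ (((n : ℝ) - 3) / 2))
        = d * ∫ s in (0:ℝ)..1,
            g s * (c * ∫ t in (0:ℝ)..1, f (s * t) * (1 - t ^ 2) ^ (((k : ℝ) - 3) / 2)) *
              (1 - s ^ 2) ^ (((n : ℝ) - (k : ℝ) - 2) / 2) * s ^ ((k : ℝ) - 1) := by
  have hk2_real : (2 : ℝ) ≤ k := by exact_mod_cast hk2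
  have hkn : (k : ℝ) + 1 ≤ n := by exact_mod_cast (by omega : k + 1 ≤ n)
  obtain ⟨Cf, hCf⟩ := isCompact_Icc.exists_bound_of_continuousOn hf
  obtain ⟨Cg, hCg⟩ := isCompact_Icc.exists_bound_of_continuousOn hg
  have key := integral_dualRadon_mul_eq_integral_mul_radon
    (a := ((k : ℝ) - 3) / 2) (b := ((n : ℝ) - k - 2) / 2) (by linarith) (by linarith)
    ((hf.mono Ioo_subset_Icc_self).aestronglyMeasurable measurableSet_Ioo)
    (ae_restrict_of_forall_mem measurableSet_Ioo fun t ht => hCf t (Ioo_subset_Icc_self ht))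
    ((hg.mono Ioo_subset_Icc_self).aestronglyMeasurable measurableSet_Ioo)
    (ae_restrict_of_forall_mem measurableSet_Ioo fun s hs => hCg s (Ioo_subset_Icc_self hs))
  rw [show 2 * (((n : ℝ) - k - 2) / 2) + 1 = n - k - 1 by ring,
    show ((k : ℝ) - 3) / 2 + ((n : ℝ) - k - 2) / 2 + 1 = (n - 3) / 2 by ring,
    show 2 * (((k : ℝ) - 3) / 2) + 2 = k - 1 by ring] at key
  refine ⟨e / c, div_pos hepos hcpos, ?_⟩
  simp only [mul_assoc e, mul_left_comm (g _) c, mul_assoc c, intervalIntegral.integral_const_mul]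
  rw [key]
  field_simp

/-- the duality relation between the Radon transform `R̃ₖ` and its dual
`R̃*ₖ` on functions of revolution in the cosine variable:
`∫₀¹ R̃*ₖ(g̃)(t) f̃(t) (1-t²)^((n-3)/2) dt
  = d_{n,k} ∫₀¹ g̃(s) R̃ₖ(f̃)(s) (1-s²)^((n-k-2)/2) s^(k-1) ds`. -/
theorem stmt1 (n k : ℕ) (hn : 3 ≤ n) (hk2 : 2 ≤ k) (hk : k ≤ n - 1)
    (f g : ℝ → ℝ) (hf : ContinuousOn f (Icc 0 1)) (hg : ContinuousOn g (Icc 0 1))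
    (c e : ℝ) (hcpos : 0 < c) (hepos : 0 < e)
    (hc : c * ∫ t in (0:ℝ)..1, (1 - t ^ 2) ^ (((k : ℝ) - 3) / 2) = 1)
    (he : e * ∫ s in (0:ℝ)..1,
        (1 - s ^ 2) ^ (((k : ℝ) - 3) / 2) * s ^ ((n : ℝ) - (k : ℝ) - 1) = 1) :
    ∃ d : ℝ, 0 < d ∧
      (∫ t in (0:ℝ)..1,
          (e * ∫ s in (0:ℝ)..1,
              g (Real.sqrt (1 - s ^ 2 * (1 - t ^ 2))) *
                (1 - s ^ 2) ^ (((k : ℝ) - 3) / 2) * s ^ ((n : ℝ) - (k : ℝ) - 1)) *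
            f t * (1 - t ^ 2) ^ (((n : ℝ) - 3) / 2))
        = d * ∫ s in (0:ℝ)..1,
            g s * (c * ∫ t in (0:ℝ)..1, f (s * t) * (1 - t ^ 2) ^ (((k : ℝ) - 3) / 2)) *
              (1 - s ^ 2) ^ (((n : ℝ) - (k : ℝ) - 2) / 2) * s ^ ((k : ℝ) - 1) :=
  stmt1_general n k hk2 hk f g hf hg c e hcpos hepos
end

section
/- Let k ≥ 2 be an integer. The range of the operator R̃_k : C([0,1]) → C([0,1]), R̃_k(f̃)(s) = c_k ∫₀¹ f̃(st)(1−t²)^((k−3)/2) dt, is dense in C([0,1]) with respect to the supremum norm. -/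
open MeasureTheory Set Polynomial

/-! The operator `f ↦ c ∫₀¹ f(s t) w(t) dt` sends the monomial `x ^ m` to `c μₘ s ^ m`, where
`μₘ = ∫₀¹ t ^ m w(t) dt` is the `m`-th moment of the weight `w(t) = (1 - t²) ^ ((k - 3) / 2)`.
These moments are positive, so every polynomial is in the range (rescale its coefficients by
`1 / (c μₘ)`), and polynomials are dense in `C([0,1])` by the Weierstrass approximation theorem. -/

noncomputable def weightedMoment (w : ℝ → ℝ) (m : ℕ) : ℝ := ∫ t in (0:ℝ)..1, t ^ m * w t

section Moments

variable {w : ℝ → ℝ}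

theorem intervalIntegrable_pow_mul (hw : IntervalIntegrable w volume 0 1) (m : ℕ) :
    IntervalIntegrable (fun t => t ^ m * w t) volume 0 1 :=
  hw.continuousOn_mul (continuous_pow m).continuousOn

theorem weightedMoment_pos (hw : IntervalIntegrable w volume 0 1)
    (hw_pos : ∀ t ∈ Ioo (0:ℝ) 1, 0 < w t) (m : ℕ) : 0 < weightedMoment w m :=
  intervalIntegral.intervalIntegral_pos_of_pos_on (intervalIntegrable_pow_mul hw m)
    (fun t ht => mul_pos (pow_pos ht.1 m) (hw_pos t ht)) one_pos

theorem integral_eval_mul_mul_eq_sum (hw : IntervalIntegrable w volume 0 1) (q : ℝ[X])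
    (s : ℝ) :
    ∫ t in (0:ℝ)..1, q.eval (s * t) * w t
      = ∑ m ∈ q.support, q.coeff m * weightedMoment w m * s ^ m := by
  have hexpand : (fun t => q.eval (s * t) * w t)
      = fun t => ∑ m ∈ q.support, q.coeff m * s ^ m * (t ^ m * w t) := by
    funext t
    rw [eval_eq_sum, sum_def, Finset.sum_mul]
    refine Finset.sum_congr rfl fun m _ => ?_
    ring
  rw [hexpand, intervalIntegral.integral_finsetSum
    fun m _ => (intervalIntegrable_pow_mul hw m).const_mul _]
  refine Finset.sum_congr rfl fun m _ => ?_
  rw [intervalIntegral.integral_const_mul, weightedMoment]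
  ring

theorem exists_polynomial_integral_eval_mul_mul_eq (hw : IntervalIntegrable w volume 0 1)
    (hμ : ∀ m, weightedMoment w m ≠ 0) {c : ℝ} (hc : c ≠ 0) (p : ℝ[X]) :
    ∃ q : ℝ[X], ∀ s, c * ∫ t in (0:ℝ)..1, q.eval (s * t) * w t = p.eval s := by
  set q : ℝ[X] := ∑ m ∈ p.support, monomial m (p.coeff m / (c * weightedMoment w m))
  have hq : ∀ m, q.coeff m = p.coeff m / (c * weightedMoment w m) := by
    intro m
    simp only [q, finsetSum_coeff, coeff_monomial]
    by_cases hm : m ∈ p.support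
    · simp [Finset.sum_ite_eq', hm]
    · simp [Finset.sum_ite_eq', hm, notMem_support_iff.mp hm]
  have hq_support : q.support = p.support := by
    ext m
    simp only [mem_support_iff, hq, ne_eq, div_eq_zero_iff, mul_eq_zero, hc, hμ m, or_self,
      or_false]
  refine ⟨q, fun s => ?_⟩
  rw [integral_eval_mul_mul_eq_sum hw, Finset.mul_sum, hq_support, eval_eq_sum, sum_def]
  refine Finset.sum_congr rfl fun m _ => ?_
  rw [hq]
  field_simp [hμ m]

end Moments

theorem stmt4_general (k : ℕ) (c : ℝ)
    (hc : c * ∫ t in (0:ℝ)..1, (1 - t ^ 2) ^ (((k : ℝ) - 3) / 2) = 1) :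
    ∀ F : ℝ → ℝ, ContinuousOn F (Icc 0 1) → ∀ ε : ℝ, 0 < ε →
      ∃ f : ℝ → ℝ, ContinuousOn f (Icc 0 1) ∧
        ∀ s ∈ Icc (0:ℝ) 1,
          |(c * ∫ t in (0:ℝ)..1, f (s * t) * (1 - t ^ 2) ^ (((k : ℝ) - 3) / 2)) - F s| < ε := by
  intro F hF ε hε
  set w : ℝ → ℝ := fun t => (1 - t ^ 2) ^ (((k : ℝ) - 3) / 2)
  -- A non-integrable weight would have the junk integral `0`, contradicting `hc`.
  have hw : IntervalIntegrable w volume 0 1 := by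
    by_contra h
    rw [intervalIntegral.integral_undef h, mul_zero] at hc
    exact zero_ne_one hc
  have hw_pos : ∀ t ∈ Ioo (0:ℝ) 1, 0 < w t := fun t ht =>
    Real.rpow_pos_of_pos (by nlinarith [ht.1, ht.2]) _
  obtain ⟨p, hp⟩ := exists_polynomial_near_of_continuousOn 0 1 F hF ε hε
  obtain ⟨q, hq⟩ := exists_polynomial_integral_eval_mul_mul_eq hw
    (fun m => (weightedMoment_pos hw hw_pos m).ne') (left_ne_zero_of_mul_eq_one hc) p
  refine ⟨fun x => q.eval x, q.continuousOn, fun s hs => ?_⟩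
  rw [hq s]
  exact hp s hs

/-- the range of `R̃ₖ : C([0,1]) → C([0,1])`,
`R̃ₖ(f̃)(s) = cₖ ∫₀¹ f̃(st)(1-t²)^((k-3)/2) dt`, is dense in `C([0,1])` for the sup norm. -/
theorem stmt4 (k : ℕ) (hk : 2 ≤ k) (c : ℝ) (hcpos : 0 < c)
    (hc : c * ∫ t in (0:ℝ)..1, (1 - t ^ 2) ^ (((k : ℝ) - 3) / 2) = 1) :
    ∀ F : ℝ → ℝ, ContinuousOn F (Icc 0 1) → ∀ ε : ℝ, 0 < ε →
      ∃ f : ℝ → ℝ, ContinuousOn f (Icc 0 1) ∧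
        ∀ s ∈ Icc (0:ℝ) 1,
          |(c * ∫ t in (0:ℝ)..1, f (s * t) * (1 - t ^ 2) ^ (((k : ℝ) - 3) / 2)) - F s| < ε :=
  stmt4_general k c hc
end

section
/- Fix s₀ ∈ (0,1) and ε > 0 with [s₀−2ε, s₀+2ε] ⊂ (0,1). For t ∈ [0,1] let T_t(s) = √(1 − s²(1−t²)) on [0,1]. Then the maximum over t ∈ [0,1] of the Lebesgue measure of T_t^{−1}([s₀−2ε, s₀+2ε]) is attained at t = s₀−2ε and equals 1 − √((1−(s₀+2ε)²)/(1−(s₀−2ε)²)), which is strictly less than 1. -/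
open MeasureTheory Set

lemma set_eq (a b t : ℝ) (ha : 0 < a) (hab : a ≤ b) (hb : b < 1) (ht0 : 0 ≤ t) (ht1 : t < 1) :
    {s : ℝ | s ∈ Icc (0:ℝ) 1 ∧ Real.sqrt (1 - s ^ 2 * (1 - t ^ 2)) ∈ Icc a b}
      = Icc (Real.sqrt ((1 - b^2)/(1 - t^2))) (min 1 (Real.sqrt ((1 - a^2)/(1 - t^2)))) := by
  have hc : 0 < 1 - t ^ 2 := by nlinarith
  ext s
  simp only [mem_setOf_eq, mem_Icc, le_min_iff]
  constructor
  · rintro ⟨⟨hs0, hs1⟩, hA, hB⟩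
    have hx : (0:ℝ) ≤ 1 - s ^ 2 * (1 - t ^ 2) := by nlinarith
    have hA2 : a ^ 2 ≤ 1 - s ^ 2 * (1 - t ^ 2) := (Real.le_sqrt ha.le hx).mp hA
    have hB2 : 1 - s ^ 2 * (1 - t ^ 2) ≤ b ^ 2 := (Real.sqrt_le_iff.mp hB).2
    refine ⟨?_, hs1, ?_⟩
    · rw [Real.sqrt_le_iff]
      exact ⟨hs0, by rw [div_le_iff₀ hc]; nlinarith⟩
    · rw [Real.le_sqrt hs0 (div_nonneg (by nlinarith) hc.le), le_div_iff₀ hc]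
      nlinarith
  · rintro ⟨hL, hs1, hU⟩
    have hs0 : 0 ≤ s := (Real.sqrt_nonneg _).trans hL
    have hU' : s ^ 2 * (1 - t ^ 2) ≤ 1 - a ^ 2 := by
      have := (Real.le_sqrt hs0 (div_nonneg (by nlinarith) hc.le)).mp hU
      rw [le_div_iff₀ hc] at this; linarith
    have hL' : 1 - b ^ 2 ≤ s ^ 2 * (1 - t ^ 2) := by
      have := (Real.sqrt_le_iff.mp hL).2
      rw [div_le_iff₀ hc] at this; linarith
    have hx : (0:ℝ) ≤ 1 - s ^ 2 * (1 - t ^ 2) := by nlinarith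
    refine ⟨⟨hs0, hs1⟩, ?_, ?_⟩
    · exact (Real.le_sqrt ha.le hx).mpr (by linarith)
    · exact Real.sqrt_le_iff.mpr ⟨by linarith, by nlinarith⟩

/-- for `T_t(s) = √(1-s²(1-t²))` on `[0,1]`, the Lebesgue measure of
`T_t⁻¹([s₀-2ε, s₀+2ε])` is maximal over `t ∈ [0,1]` at `t = s₀-2ε`, where it equals
`1 - √((1-(s₀+2ε)²)/(1-(s₀-2ε)²)) < 1`. -/
theorem stmt5 (s₀ ε : ℝ) (hs₀ : s₀ ∈ Ioo (0:ℝ) 1) (hε : 0 < ε)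
    (hsub : Icc (s₀ - 2 * ε) (s₀ + 2 * ε) ⊆ Ioo (0:ℝ) 1) :
    (∀ t ∈ Icc (0:ℝ) 1,
        (volume {s : ℝ | s ∈ Icc (0:ℝ) 1 ∧
            Real.sqrt (1 - s ^ 2 * (1 - t ^ 2)) ∈ Icc (s₀ - 2 * ε) (s₀ + 2 * ε)}).toReal
          ≤ (volume {s : ℝ | s ∈ Icc (0:ℝ) 1 ∧
              Real.sqrt (1 - s ^ 2 * (1 - (s₀ - 2 * ε) ^ 2)) ∈
                Icc (s₀ - 2 * ε) (s₀ + 2 * ε)}).toReal) ∧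
    (volume {s : ℝ | s ∈ Icc (0:ℝ) 1 ∧
        Real.sqrt (1 - s ^ 2 * (1 - (s₀ - 2 * ε) ^ 2)) ∈
          Icc (s₀ - 2 * ε) (s₀ + 2 * ε)}).toReal
      = 1 - Real.sqrt ((1 - (s₀ + 2 * ε) ^ 2) / (1 - (s₀ - 2 * ε) ^ 2)) ∧
    1 - Real.sqrt ((1 - (s₀ + 2 * ε) ^ 2) / (1 - (s₀ - 2 * ε) ^ 2)) < 1 := by
  set a : ℝ := s₀ - 2 * ε with hadef
  set b : ℝ := s₀ + 2 * ε with hbdef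
  have hab : a ≤ b := by simp only [hadef, hbdef]; linarith
  have haIoo := hsub ⟨le_refl a, hab⟩
  have hbIoo := hsub ⟨hab, le_refl b⟩
  have ha : 0 < a := haIoo.1
  have ha1 : a < 1 := haIoo.2
  have hb : 0 < b := hbIoo.1
  have hb1 : b < 1 := hbIoo.2
  have hca : 0 < 1 - a ^ 2 := by nlinarith
  have hcb : 0 < 1 - b ^ 2 := by nlinarith
  have hba : 1 - b ^ 2 ≤ 1 - a ^ 2 := by nlinarith
  have hL1 : Real.sqrt ((1 - b ^ 2) / (1 - a ^ 2)) ≤ 1 :=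
    Real.sqrt_le_one.mpr ((div_le_one hca).mpr hba)
  have hM0 : 0 ≤ 1 - Real.sqrt ((1 - b ^ 2) / (1 - a ^ 2)) := by linarith
  -- equality part
  have hval : (volume {s : ℝ | s ∈ Icc (0:ℝ) 1 ∧
        Real.sqrt (1 - s ^ 2 * (1 - a ^ 2)) ∈ Icc a b}).toReal
      = 1 - Real.sqrt ((1 - b ^ 2) / (1 - a ^ 2)) := by
    rw [set_eq a b a ha hab hb1 ha.le ha1, Real.volume_Icc]
    rw [div_self hca.ne', Real.sqrt_one, min_self]
    rw [ENNReal.toReal_ofReal hM0]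
  refine ⟨?_, hval, ?_⟩
  · intro t ht
    rw [hval]
    rcases lt_or_eq_of_le ht.2 with ht1 | ht1
    · rw [set_eq a b t ha hab hb1 ht.1 ht1, Real.volume_Icc, ENNReal.toReal_ofReal']
      have hct : 0 < 1 - t ^ 2 := by nlinarith [ht.1]
      refine max_le ?_ hM0
      rcases le_or_gt a t with hta | hta
      · -- t ≥ a : lower endpoint is large
        have h1 : Real.sqrt ((1 - b ^ 2) / (1 - a ^ 2))
            ≤ Real.sqrt ((1 - b ^ 2) / (1 - t ^ 2)) :=
          Real.sqrt_le_sqrt (div_le_div_of_nonneg_left hcb.le hct (by nlinarith [ht.1]))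
        have h2 : min 1 (Real.sqrt ((1 - a ^ 2) / (1 - t ^ 2))) ≤ 1 := min_le_left _ _
        linarith
      · -- t < a
        have hta2 : 1 - a ^ 2 ≤ 1 - t ^ 2 := by nlinarith [ht.1]
        have hsq : Real.sqrt (1 - a ^ 2) ≤ Real.sqrt (1 - t ^ 2) := Real.sqrt_le_sqrt hta2
        have hspos : 0 < Real.sqrt (1 - a ^ 2) := Real.sqrt_pos.mpr hca
        have hnum : 0 ≤ Real.sqrt (1 - a ^ 2) - Real.sqrt (1 - b ^ 2) := by
          have := Real.sqrt_le_sqrt hba; linarith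
        have key : (Real.sqrt (1 - a ^ 2) - Real.sqrt (1 - b ^ 2)) / Real.sqrt (1 - t ^ 2)
            ≤ (Real.sqrt (1 - a ^ 2) - Real.sqrt (1 - b ^ 2)) / Real.sqrt (1 - a ^ 2) :=
          div_le_div_of_nonneg_left hnum hspos hsq
        rw [Real.sqrt_div hcb.le, Real.sqrt_div hcb.le, Real.sqrt_div hca.le]
        have h2 : min 1 (Real.sqrt (1 - a ^ 2) / Real.sqrt (1 - t ^ 2))
            ≤ Real.sqrt (1 - a ^ 2) / Real.sqrt (1 - t ^ 2) := min_le_right _ _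
        have hrw : 1 - Real.sqrt (1 - b ^ 2) / Real.sqrt (1 - a ^ 2)
            = (Real.sqrt (1 - a ^ 2) - Real.sqrt (1 - b ^ 2)) / Real.sqrt (1 - a ^ 2) := by
          field_simp
        rw [hrw]
        rw [sub_div] at key
        linarith
    · -- t = 1
      subst ht1
      have hemp : {s : ℝ | s ∈ Icc (0:ℝ) 1 ∧
          Real.sqrt (1 - s ^ 2 * (1 - (1:ℝ) ^ 2)) ∈ Icc a b} = ∅ := by
        ext s
        simp only [mem_setOf_eq, mem_empty_iff_false, iff_false, not_and]
        rintro - h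
        rw [one_pow, sub_self, mul_zero, sub_zero, Real.sqrt_one] at h
        exact absurd h.2 (by linarith)
      rw [hemp]
      simpa using hM0
  · have : 0 < Real.sqrt ((1 - b ^ 2) / (1 - a ^ 2)) :=
      Real.sqrt_pos.mpr (div_pos hcb hca)
    linarith
end

section
/- Let n ≥ 4, 2 ≤ k ≤ n−2, and s₀ ∈ (0,1). Then there exists an infinitely differentiable function g̃ : [0,1] → ℝ satisfying: (1) e_{n,n−k} ∫₀¹ g̃(√(1−s²(1−t²)))(1−s²)^((n−k−3)/2) s^{k−1} ds ≥ 1 for all t ∈ [0,1]; (2) e_{n,k} ∫₀¹ g̃(s√(1−t²))(1−s²)^((k−3)/2) s^{n−k−1} ds ≥ 1 for all t ∈ [0,1]; (3) g̃(s₀) = −1. Here e_{n,m} > 0 is the constant making the measure e_{n,m}(1−s²)^((m−3)/2) s^{n−m−1} ds a probability measure on [0,1]. -/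
open MeasureTheory Set

lemma stmt8_aux (e : ℝ) (w a : ℝ → ℝ) (he : 0 < e)
    (hw : IntervalIntegrable w volume 0 1)
    (hwnn : ∀ s ∈ Icc (0:ℝ) 1, 0 ≤ w s)
    (hint : e * ∫ s in (0:ℝ)..1, w s = 1)
    (ha : Continuous a) (ha0 : ∀ s, 0 ≤ a s) (ha1 : ∀ s, a s ≤ 1)
    (s₁ : ℝ) (hs₁0 : 0 < s₁) (hs₁1 : s₁ ≤ 1)
    (hsmall : ∀ s ∈ Icc (0:ℝ) s₁, a s ≤ 1 / 2)
    (c : ℝ) (hc0 : 0 ≤ c + 1)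
    (hc : 4 ≤ (c + 1) * (e * ∫ s in (0:ℝ)..s₁, w s)) :
    1 ≤ e * ∫ s in (0:ℝ)..1, (c - (c + 1) * a s) * w s := by
  have haw : IntervalIntegrable (fun s => a s * w s) volume 0 1 := by
    have hmeas : AEStronglyMeasurable w (volume.restrict (uIoc (0:ℝ) 1)) := by
      rw [uIoc_of_le (zero_le_one (α := ℝ))]; exact hw.aestronglyMeasurable
    apply hw.mono_fun ((ha.aestronglyMeasurable.restrict).mul hmeas)
    filter_upwards with x
    simp only [Real.norm_eq_abs, Pi.mul_apply]
    have h1 : |a x * w x| = a x * |w x| := by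
      rw [abs_mul, abs_of_nonneg (ha0 x)]
    nlinarith [abs_nonneg (w x), ha0 x, ha1 x]
  have hsub1 : uIcc (0:ℝ) s₁ ⊆ uIcc (0:ℝ) 1 := by
    rw [uIcc_of_le hs₁0.le, uIcc_of_le zero_le_one]
    exact Icc_subset_Icc le_rfl hs₁1
  have hsub2 : uIcc s₁ (1:ℝ) ⊆ uIcc (0:ℝ) 1 := by
    rw [uIcc_of_le hs₁1, uIcc_of_le zero_le_one]
    exact Icc_subset_Icc hs₁0.le le_rfl
  have hw1 : IntervalIntegrable w volume 0 s₁ := hw.mono_set hsub1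
  have hw2 : IntervalIntegrable w volume s₁ 1 := hw.mono_set hsub2
  have haw1 : IntervalIntegrable (fun s => a s * w s) volume 0 s₁ := haw.mono_set hsub1
  have haw2 : IntervalIntegrable (fun s => a s * w s) volume s₁ 1 := haw.mono_set hsub2
  have hsplitw : (∫ s in (0:ℝ)..s₁, w s) + ∫ s in s₁..1, w s = ∫ s in (0:ℝ)..1, w s :=
    intervalIntegral.integral_add_adjacent_intervals hw1 hw2
  have haw1small : (∫ s in (0:ℝ)..s₁, a s * w s)
      ≤ (1 / 2) * ∫ s in (0:ℝ)..s₁, w s := by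
    rw [← intervalIntegral.integral_const_mul]
    apply intervalIntegral.integral_mono_on hs₁0.le haw1 (hw1.const_mul _)
    intro x hx
    have hxI : x ∈ Icc (0:ℝ) 1 := ⟨hx.1, hx.2.trans hs₁1⟩
    nlinarith [hwnn x hxI, ha0 x, hsmall x hx]
  have hsplitaw : (∫ s in (0:ℝ)..1, a s * w s)
      = (∫ s in (0:ℝ)..s₁, a s * w s) + ∫ s in s₁..1, a s * w s :=
    (intervalIntegral.integral_add_adjacent_intervals haw1 haw2).symm
  have hJ2 : (∫ s in s₁..1, a s * w s) ≤ ∫ s in s₁..1, w s := by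
    apply intervalIntegral.integral_mono_on hs₁1 haw2 hw2
    intro x hx
    have hxI : x ∈ Icc (0:ℝ) 1 := ⟨hs₁0.le.trans hx.1, hx.2⟩
    nlinarith [hwnn x hxI, ha0 x, ha1 x]
  have hkey : (∫ s in (0:ℝ)..1, (c - (c + 1) * a s) * w s)
      = c * (∫ s in (0:ℝ)..1, w s) - (c + 1) * ∫ s in (0:ℝ)..1, a s * w s := by
    rw [← intervalIntegral.integral_const_mul, ← intervalIntegral.integral_const_mul,
      ← intervalIntegral.integral_sub (hw.const_mul c) (haw.const_mul (c + 1))]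
    congr 1; ext s; ring
  rw [hkey]
  set I := ∫ s in (0:ℝ)..1, w s
  set J := ∫ s in (0:ℝ)..1, a s * w s
  set K := ∫ s in (0:ℝ)..s₁, w s
  have hJ' : J ≤ I - K / 2 := by rw [hsplitaw]; linarith
  nlinarith [mul_le_mul_of_nonneg_left hJ' hc0,
    mul_le_mul_of_nonneg_left (mul_le_mul_of_nonneg_left hJ' hc0) he.le]

lemma stmt8_wnn (p q : ℝ) : ∀ s ∈ Icc (0:ℝ) 1, 0 ≤ (1 - s ^ 2) ^ p * s ^ q := by
  intro s hs
  exact mul_nonneg (Real.rpow_nonneg (by nlinarith [hs.1, hs.2]) p) (Real.rpow_nonneg hs.1 q)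

lemma stmt8_wint (e p q : ℝ)
    (hint : e * ∫ s in (0:ℝ)..1, (1 - s ^ 2) ^ p * s ^ q = 1) :
    IntervalIntegrable (fun s => (1 - s ^ 2) ^ p * s ^ q) volume 0 1 := by
  by_contra h
  rw [intervalIntegral.integral_undef h, mul_zero] at hint
  exact zero_ne_one hint

lemma stmt8_wpos (p q s₁ : ℝ) (h0 : 0 < s₁) (h1 : s₁ ≤ 1)
    (hw : IntervalIntegrable (fun s => (1 - s ^ 2) ^ p * s ^ q) volume 0 1) :
    0 < ∫ s in (0:ℝ)..s₁, (1 - s ^ 2) ^ p * s ^ q := by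
  apply intervalIntegral.intervalIntegral_pos_of_pos_on
  · apply hw.mono_set
    rw [uIcc_of_le h0.le, uIcc_of_le (zero_le_one (α := ℝ))]
    exact Icc_subset_Icc le_rfl h1
  · intro x hx
    have hx1 : x < 1 := lt_of_lt_of_le hx.2 h1
    exact mul_pos (Real.rpow_pos_of_pos (by nlinarith [hx.1]) p)
      (Real.rpow_pos_of_pos hx.1 q)
  · exact h0

/-- The analytic "bump": Gaussian centered at `s₀` with width `δ`. -/
lemma stmt8_gauss_small (s₀ δ x : ℝ) (hδ : 0 < δ) (hdist : δ ≤ |x - s₀|) :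
    Real.exp (-((x - s₀) / δ) ^ 2) ≤ 1 / 2 := by
  have h1 : (1:ℝ) ≤ ((x - s₀) / δ) ^ 2 := by
    rw [div_pow, le_div_iff₀ (by positivity)]
    have := sq_abs (x - s₀)
    nlinarith [abs_nonneg (x - s₀)]
  calc Real.exp (-((x - s₀) / δ) ^ 2) ≤ Real.exp (-1) := by
        apply Real.exp_le_exp.mpr; linarith
  _ ≤ 1 / 2 := by
        rw [Real.exp_neg]
        rw [inv_le_comm₀ (Real.exp_pos 1) (by norm_num)]
        have := Real.add_one_le_exp (1:ℝ)
        linarith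

set_option maxHeartbeats 2000000 in
/-- Proposition 4.1: for `n ≥ 4`, `2 ≤ k ≤ n-2`, `s₀ ∈ (0,1)`, there is a
smooth `g̃ : [0,1] → ℝ` with `R̃*_{n-k}(g̃) ≥ 1` and `(I ∘ R̃ₖ)*(g̃) ≥ 1` pointwise on
`[0,1]`, yet `g̃(s₀) = -1`. -/
theorem stmt8 (n k : ℕ) (hn : 4 ≤ n) (hk2 : 2 ≤ k) (hk : k ≤ n - 2)
    (s₀ : ℝ) (hs₀ : s₀ ∈ Ioo (0:ℝ) 1)
    (e₁ e₂ : ℝ) (he₁pos : 0 < e₁) (he₂pos : 0 < e₂)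
    (he₁ : e₁ * ∫ s in (0:ℝ)..1,
        (1 - s ^ 2) ^ (((n : ℝ) - (k : ℝ) - 3) / 2) * s ^ ((k : ℝ) - 1) = 1)
    (he₂ : e₂ * ∫ s in (0:ℝ)..1,
        (1 - s ^ 2) ^ (((k : ℝ) - 3) / 2) * s ^ ((n : ℝ) - (k : ℝ) - 1) = 1) :
    ∃ g : ℝ → ℝ, ContDiff ℝ (⊤ : ℕ∞) g ∧
      (∀ t ∈ Icc (0:ℝ) 1,
        1 ≤ e₁ * ∫ s in (0:ℝ)..1,
          g (Real.sqrt (1 - s ^ 2 * (1 - t ^ 2))) *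
            ((1 - s ^ 2) ^ (((n : ℝ) - (k : ℝ) - 3) / 2) * s ^ ((k : ℝ) - 1))) ∧
      (∀ t ∈ Icc (0:ℝ) 1,
        1 ≤ e₂ * ∫ s in (0:ℝ)..1,
          g (s * Real.sqrt (1 - t ^ 2)) *
            ((1 - s ^ 2) ^ (((k : ℝ) - 3) / 2) * s ^ ((n : ℝ) - (k : ℝ) - 1))) ∧
      g s₀ = -1 := by
  obtain ⟨hs₀0, hs₀1⟩ := hs₀
  set p₁ : ℝ := ((n : ℝ) - (k : ℝ) - 3) / 2
  set q₁ : ℝ := (k : ℝ) - 1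
  set p₂ : ℝ := ((k : ℝ) - 3) / 2
  set q₂ : ℝ := (n : ℝ) - (k : ℝ) - 1
  have hw₁ := stmt8_wint e₁ p₁ q₁ he₁
  have hw₂ := stmt8_wint e₂ p₂ q₂ he₂
  -- geometric setup
  set δ : ℝ := min ((1 - s₀) / 2) (s₀ / 2) with hδdef
  have hδpos : 0 < δ := lt_min (by linarith) (by linarith)
  have hδ1 : δ ≤ (1 - s₀) / 2 := min_le_left _ _
  have hδ2 : δ ≤ s₀ / 2 := min_le_right _ _
  set aa : ℝ := (1 + s₀) / 2 with haadef
  have haa0 : 0 < aa := by positivity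
  have haa1 : aa < 1 := by simp only [haadef]; linarith
  have hs0aa : s₀ + δ ≤ aa := by simp only [haadef]; linarith
  set s₁ : ℝ := Real.sqrt (1 - aa ^ 2) / 2 with hs₁def
  have hsq : Real.sqrt (1 - aa ^ 2) ^ 2 = 1 - aa ^ 2 :=
    Real.sq_sqrt (by nlinarith)
  have hs₁0 : 0 < s₁ := by
    have := Real.sqrt_pos.mpr (show (0:ℝ) < 1 - aa ^ 2 by nlinarith)
    simp only [hs₁def]; linarith
  have hs₁1 : s₁ ≤ 1 := by
    have h := Real.sqrt_le_one.mpr (show 1 - aa ^ 2 ≤ 1 by nlinarith)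
    simp only [hs₁def]; linarith
  set s₂ : ℝ := s₀ / 2 with hs₂def
  have hs₂0 : 0 < s₂ := by positivity
  have hs₂1 : s₂ ≤ 1 := by simp only [hs₂def]; linarith
  -- the masses
  set η₁ : ℝ := e₁ * ∫ s in (0:ℝ)..s₁, (1 - s ^ 2) ^ p₁ * s ^ q₁ with hη₁def
  set η₂ : ℝ := e₂ * ∫ s in (0:ℝ)..s₂, (1 - s ^ 2) ^ p₂ * s ^ q₂ with hη₂def
  have hη₁pos : 0 < η₁ := mul_pos he₁pos (stmt8_wpos p₁ q₁ s₁ hs₁0 hs₁1 hw₁)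
  have hη₂pos : 0 < η₂ := mul_pos he₂pos (stmt8_wpos p₂ q₂ s₂ hs₂0 hs₂1 hw₂)
  set c : ℝ := max (4 / η₁) (4 / η₂) with hcdef
  have hcpos : 0 < c := lt_max_of_lt_left (by positivity)
  have hc0 : 0 ≤ c + 1 := by linarith
  have hc₁ : 4 ≤ (c + 1) * η₁ := by
    have h1 : 4 / η₁ ≤ c := le_max_left _ _
    have h2 : 4 ≤ c * η₁ := (div_le_iff₀ hη₁pos).mp h1
    nlinarith
  have hc₂ : 4 ≤ (c + 1) * η₂ := by
    have h1 : 4 / η₂ ≤ c := le_max_right _ _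
    have h2 : 4 ≤ c * η₂ := (div_le_iff₀ hη₂pos).mp h1
    nlinarith
  -- the analytic bump function
  set φ : ℝ → ℝ := fun x => Real.exp (-((x - s₀) / δ) ^ 2) with hφdef
  have hφcont : Continuous φ :=
    Real.continuous_exp.comp ((((continuous_id.sub continuous_const).div_const δ).pow 2).neg)
  have hφ0 : ∀ x, 0 ≤ φ x := fun x => (Real.exp_pos _).le
  have hφ1 : ∀ x, φ x ≤ 1 := fun x => Real.exp_le_one_iff.mpr (neg_nonpos.mpr (by positivity))
  have hφsmall : ∀ x, δ ≤ |x - s₀| → φ x ≤ 1 / 2 :=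
    fun x hx => stmt8_gauss_small s₀ δ x hδpos hx
  refine ⟨fun x => c - (c + 1) * φ x, ?_, ?_, ?_, ?_⟩
  · apply contDiff_const.sub (contDiff_const.mul ?_)
    apply Real.contDiff_exp.comp
    apply ContDiff.neg
    exact (((contDiff_id.sub contDiff_const).div_const δ).pow 2)
  · intro t ht
    refine stmt8_aux e₁ _ (fun s => φ (Real.sqrt (1 - s ^ 2 * (1 - t ^ 2)))) he₁pos hw₁
      (stmt8_wnn p₁ q₁) he₁
      (hφcont.comp (Real.continuous_sqrt.comp (continuous_const.sub ((continuous_pow 2).mul continuous_const))))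
      (fun s => hφ0 _) (fun s => hφ1 _) s₁ hs₁0 hs₁1 ?_ c hc0 hc₁
    intro s hs
    apply hφsmall
    set u := Real.sqrt (1 - s ^ 2 * (1 - t ^ 2)) with hudef
    have ht0 := ht.1
    have ht1 := ht.2
    have hs0 := hs.1
    have hss₁ := hs.2
    have harg : aa ^ 2 ≤ 1 - s ^ 2 * (1 - t ^ 2) := by
      have h1 : s ^ 2 ≤ s₁ ^ 2 := by nlinarith
      have h2 : s₁ ^ 2 = (1 - aa ^ 2) / 4 := by
        simp only [hs₁def]; rw [div_pow, hsq]; norm_num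
      nlinarith
    have hu : aa ≤ u := by
      have := Real.sqrt_le_sqrt harg
      rwa [Real.sqrt_sq haa0.le] at this
    calc δ ≤ u - s₀ := by linarith
    _ ≤ |u - s₀| := le_abs_self _
  · intro t ht
    refine stmt8_aux e₂ _ (fun s => φ (s * Real.sqrt (1 - t ^ 2))) he₂pos hw₂
      (stmt8_wnn p₂ q₂) he₂
      (hφcont.comp (continuous_id.mul continuous_const))
      (fun s => hφ0 _) (fun s => hφ1 _) s₂ hs₂0 hs₂1 ?_ c hc0 hc₂
    intro s hs
    apply hφsmall
    set u := s * Real.sqrt (1 - t ^ 2) with hudef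
    have ht0 := ht.1
    have ht1 := ht.2
    have hs0 := hs.1
    have hss₂ := hs.2
    have hsqrt1 : Real.sqrt (1 - t ^ 2) ≤ 1 := Real.sqrt_le_one.mpr (by nlinarith)
    have hsqrt0 : 0 ≤ Real.sqrt (1 - t ^ 2) := Real.sqrt_nonneg _
    have hu1 : u ≤ s₂ := by
      calc u ≤ s * 1 := by apply mul_le_mul_of_nonneg_left hsqrt1 hs0
      _ = s := mul_one s
      _ ≤ s₂ := hss₂
    have hu0 : 0 ≤ u := mul_nonneg hs0 hsqrt0
    have hs₂s : s₀ - s₂ = s₀ / 2 := by simp only [hs₂def]; ring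
    calc δ ≤ s₀ - u := by linarith
    _ ≤ |u - s₀| := by rw [abs_sub_comm]; exact le_abs_self _
  · show c - (c + 1) * φ s₀ = -1
    have h1 : φ s₀ = 1 := by simp [hφdef]
    rw [h1]; ring
end

section
/- Let n ≥ 4, 2 ≤ k ≤ n−2, and let g̃ ∈ C([0,1]) satisfy g̃(s₀) < 0 for some s₀ ∈ (0,1). Then there exists h̃ ∈ C([0,1]) such that R̃_{n−k}(h̃) ≥ 0 on [0,1] and ∫₀¹ g̃(s) R̃_{n−k}(h̃)(s) (1−s²)^((n−k−2)/2) s^{k−1} ds < 0, where R̃_{n−k}(h̃)(s) = c_{n−k} ∫₀¹ h̃(st)(1−t²)^((n−k−3)/2) dt. -/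
open MeasureTheory Set

lemma aux_int {α : ℝ} (hα : -1 < α) (m : ℕ) :
    IntervalIntegrable (fun t : ℝ => t ^ m * (1 - t ^ 2) ^ α) volume 0 1 := by
  have h1 : IntervalIntegrable (fun t : ℝ => (1 - t) ^ α) volume 0 1 := by
    have := (intervalIntegral.intervalIntegrable_rpow' (a := 1) (b := 0) hα).comp_sub_left 1
    simpa using this
  set C : ℝ := max 1 (2 ^ α) with hC
  have hC0 : 0 ≤ C := le_trans zero_le_one (le_max_left _ _)
  apply ((h1.const_mul C)).mono_fun
  · apply Measurable.aestronglyMeasurable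
    fun_prop
  · filter_upwards [ae_restrict_mem measurableSet_uIoc] with t ht
    rw [uIoc_of_le (by norm_num : (0:ℝ) ≤ 1)] at ht
    obtain ⟨ht0, ht1⟩ := ht
    have h1t : (0:ℝ) ≤ 1 - t := by linarith
    have h1t' : (0:ℝ) ≤ 1 + t := by linarith
    have hfac : (1 - t ^ 2 : ℝ) = (1 - t) * (1 + t) := by ring
    have hsplit : (1 - t ^ 2 : ℝ) ^ α = (1 - t) ^ α * (1 + t) ^ α := by
      rw [hfac, Real.mul_rpow h1t h1t']
    have hb1 : (1 + t) ^ α ≤ C := by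
      rcases le_or_gt 0 α with h | h
      · exact le_trans (Real.rpow_le_rpow h1t' (by linarith) h) (le_max_right _ _)
      · exact le_trans (Real.rpow_le_one_of_one_le_of_nonpos (by linarith) h.le) (le_max_left _ _)
    have htm : t ^ m ≤ 1 := pow_le_one₀ ht0.le ht1
    have hnn : (0:ℝ) ≤ (1 - t) ^ α := Real.rpow_nonneg h1t _
    have hnn2 : (0:ℝ) ≤ (1 + t) ^ α := Real.rpow_nonneg h1t' _
    simp only [norm_mul, Real.norm_eq_abs]
    rw [abs_of_nonneg (pow_nonneg ht0.le m), abs_of_nonneg (by rw [hsplit]; positivity),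
      abs_of_nonneg hC0, abs_of_nonneg hnn, hsplit]
    calc t ^ m * ((1 - t) ^ α * (1 + t) ^ α) ≤ 1 * ((1 - t) ^ α * C) := by
          apply mul_le_mul htm (by exact mul_le_mul_of_nonneg_left hb1 hnn) (by positivity) zero_le_one
      _ = C * (1 - t) ^ α := by ring

lemma aux_pos {α : ℝ} (hα : -1 < α) (m : ℕ) :
    0 < ∫ t in (0:ℝ)..1, t ^ m * (1 - t ^ 2) ^ α := by
  apply intervalIntegral.intervalIntegral_pos_of_pos_on (aux_int hα m) _ one_pos
  intro t ⟨ht0, ht1⟩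
  have : (0:ℝ) < 1 - t ^ 2 := by nlinarith
  positivity

lemma key_radon {α : ℝ} (hα : -1 < α) {c : ℝ} (hc : c ≠ 0) (p : Polynomial ℝ) (s : ℝ) :
    c * ∫ t in (0:ℝ)..1,
      (∑ m ∈ Finset.range (p.natDegree + 1),
        (p.coeff m / (c * ∫ u in (0:ℝ)..1, u ^ m * (1 - u ^ 2) ^ α)) * (s * t) ^ m) *
        (1 - t ^ 2) ^ α = p.eval s := by
  set μ : ℕ → ℝ := fun m => ∫ u in (0:ℝ)..1, u ^ m * (1 - u ^ 2) ^ α with hμdef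
  have hμ : ∀ m, 0 < μ m := fun m => aux_pos hα m
  have h1 : (fun t : ℝ => (∑ m ∈ Finset.range (p.natDegree + 1),
      (p.coeff m / (c * μ m)) * (s * t) ^ m) * (1 - t ^ 2) ^ α)
      = fun t : ℝ => ∑ m ∈ Finset.range (p.natDegree + 1),
        (p.coeff m / (c * μ m) * s ^ m) * (t ^ m * (1 - t ^ 2) ^ α) := by
    funext t
    rw [Finset.sum_mul]
    exact Finset.sum_congr rfl fun m _ => by ring
  rw [h1, intervalIntegral.integral_finset_sum
    (fun m _ => (aux_int hα m).const_mul _)]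
  have h2 : ∀ m ∈ Finset.range (p.natDegree + 1),
      (∫ t in (0:ℝ)..1, (p.coeff m / (c * μ m) * s ^ m) * (t ^ m * (1 - t ^ 2) ^ α))
      = p.coeff m / (c * μ m) * s ^ m * μ m := fun m _ =>
    intervalIntegral.integral_const_mul _ _
  rw [Finset.sum_congr rfl h2, Finset.mul_sum]
  rw [Polynomial.eval_eq_sum_range]
  apply Finset.sum_congr rfl
  intro m _
  have := (hμ m).ne'
  field_simp

set_option maxHeartbeats 4000000 in
/-- if `g̃ ∈ C([0,1])` is negative at some `s₀ ∈ (0,1)`, then there is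
`h̃ ∈ C([0,1])` with `R̃_{n-k}(h̃) ≥ 0` on `[0,1]` and
`∫₀¹ g̃(s) R̃_{n-k}(h̃)(s) (1-s²)^((n-k-2)/2) s^(k-1) ds < 0`;
i.e. `g̃` is not a nonnegative functional on the range of `R̃_{n-k}`. -/
theorem stmt9 (n k : ℕ) (hn : 4 ≤ n) (hk2 : 2 ≤ k) (hk : k ≤ n - 2)
    (g : ℝ → ℝ) (hg : ContinuousOn g (Icc 0 1))
    (s₀ : ℝ) (hs₀ : s₀ ∈ Ioo (0:ℝ) 1) (hneg : g s₀ < 0)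
    (c : ℝ) (hcpos : 0 < c)
    (hc : c * ∫ t in (0:ℝ)..1, (1 - t ^ 2) ^ (((n : ℝ) - (k : ℝ) - 3) / 2) = 1) :
    ∃ h : ℝ → ℝ, ContinuousOn h (Icc 0 1) ∧
      (∀ s ∈ Icc (0:ℝ) 1,
        0 ≤ c * ∫ t in (0:ℝ)..1, h (s * t) * (1 - t ^ 2) ^ (((n : ℝ) - (k : ℝ) - 3) / 2)) ∧
      (∫ s in (0:ℝ)..1,
          g s * (c * ∫ t in (0:ℝ)..1, h (s * t) * (1 - t ^ 2) ^ (((n : ℝ) - (k : ℝ) - 3) / 2)) *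
            (1 - s ^ 2) ^ (((n : ℝ) - (k : ℝ) - 2) / 2) * s ^ ((k : ℝ) - 1)) < 0 := by
  have hkn : k + 2 ≤ n := by omega
  have hknR : (k : ℝ) + 2 ≤ (n : ℝ) := by exact_mod_cast hkn
  set α : ℝ := ((n : ℝ) - (k : ℝ) - 3) / 2 with hαdef
  set β : ℝ := ((n : ℝ) - (k : ℝ) - 2) / 2 with hβdef
  set κ : ℝ := (k : ℝ) - 1 with hκdef
  have hα : -1 < α := by rw [hαdef]; linarith
  have hβ : 0 ≤ β := by rw [hβdef]; linarith
  have hκ : 0 ≤ κ := by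
    have : (2 : ℝ) ≤ (k : ℝ) := by exact_mod_cast hk2
    rw [hκdef]; linarith
  have hcne : c ≠ 0 := ne_of_gt hcpos
  -- continuity of weights
  have contw1 : Continuous fun s : ℝ => (1 - s ^ 2) ^ β := by
    rw [continuous_iff_continuousAt]
    intro x
    exact (Real.continuousAt_rpow_const _ _ (Or.inr hβ)).comp (by fun_prop)
  have contw2 : Continuous fun s : ℝ => s ^ κ := by
    rw [continuous_iff_continuousAt]
    intro x
    exact Real.continuousAt_rpow_const _ _ (Or.inr hκ)
  set G : ℝ → ℝ := fun s => g s * (1 - s ^ 2) ^ β * s ^ κ with hGdef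
  have hGc : ContinuousOn G (Icc 0 1) :=
    (hg.mul contw1.continuousOn).mul contw2.continuousOn
  have hs₀I : s₀ ∈ Icc (0:ℝ) 1 := ⟨hs₀.1.le, hs₀.2.le⟩
  have hw1pos : 0 < (1 - s₀ ^ 2) ^ β := Real.rpow_pos_of_pos (by nlinarith [hs₀.1, hs₀.2]) _
  have hw2pos : 0 < s₀ ^ κ := Real.rpow_pos_of_pos hs₀.1 _
  have hGneg : G s₀ < 0 := by
    have : g s₀ * ((1 - s₀ ^ 2) ^ β * s₀ ^ κ) < 0 :=
      mul_neg_of_neg_of_pos hneg (mul_pos hw1pos hw2pos)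
    rw [hGdef]; dsimp only; linarith [this]
  -- bound M
  obtain ⟨M, hM⟩ := isCompact_Icc.exists_bound_of_continuousOn hGc
  have hM0 : 0 ≤ M := le_trans (norm_nonneg _) (hM 0 ⟨le_refl _, zero_le_one⟩)
  have hMabs : ∀ s ∈ Icc (0:ℝ) 1, |G s| ≤ M := fun s hs => hM s hs
  -- find η
  have hnhds : Icc (0:ℝ) 1 ∈ nhds s₀ := Icc_mem_nhds hs₀.1 hs₀.2
  have hcGat : ContinuousAt G s₀ := hGc.continuousAt hnhds
  have hev : ∀ᶠ s in nhds s₀, G s < G s₀ / 2 :=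
    hcGat.eventually_lt_const (by linarith)
  have hev2 : ∀ᶠ s in nhds s₀, s ∈ Ioo (0:ℝ) 1 :=
    Filter.eventually_of_mem (isOpen_Ioo.mem_nhds hs₀) (fun x hx => hx)
  obtain ⟨δ, hδ0, hδ⟩ := Metric.eventually_nhds_iff.1 (hev.and hev2)
  set η : ℝ := min (δ / 2) (1 / 2) with hηdef
  have hη0 : 0 < η := lt_min (by linarith) (by norm_num)
  have hη12 : η ≤ 1 / 2 := min_le_right _ _
  have hηδ : η < δ := lt_of_le_of_lt (min_le_left _ _) (by linarith)
  have hball : ∀ s : ℝ, |s - s₀| ≤ η → G s < G s₀ / 2 ∧ s ∈ Ioo (0:ℝ) 1 := by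
    intro s hs
    exact hδ (by rw [Real.dist_eq]; linarith)
  set a₀ : ℝ := 1 - η ^ 2 with ha₀def
  set b₀ : ℝ := 1 - η ^ 2 / 4 with hb₀def
  have ha₀0 : 0 < a₀ := by rw [ha₀def]; nlinarith
  have hb₀0 : 0 < b₀ := by rw [hb₀def]; nlinarith
  have hab : a₀ < b₀ := by rw [ha₀def, hb₀def]; nlinarith
  have hb₀1 : b₀ ≤ 1 := by rw [hb₀def]; nlinarith
  set ε : ℝ := -(G s₀) / 2 with hεdef
  have hε0 : 0 < ε := by rw [hεdef]; linarith
  -- choose N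
  have htend : Filter.Tendsto (fun N : ℕ => (a₀ / b₀) ^ N) Filter.atTop (nhds 0) :=
    tendsto_pow_atTop_nhds_zero_of_lt_one (div_nonneg ha₀0.le hb₀0.le)
      ((div_lt_one hb₀0).2 hab)
  obtain ⟨N, hN⟩ :=
    (htend.eventually_lt_const (show (0:ℝ) < ε * η / (2 * M + 1) by positivity)).exists
  -- the polynomial and h
  set p : Polynomial ℝ := (1 - (Polynomial.X - Polynomial.C s₀) ^ 2) ^ N with hpdef
  set P : ℝ → ℝ := fun s => (1 - (s - s₀) ^ 2) ^ N with hPdef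
  have hPeval : ∀ s : ℝ, p.eval s = P s := by intro s; rw [hpdef, hPdef]; simp
  have hPcont : Continuous P := by rw [hPdef]; fun_prop
  have hPnn : ∀ s ∈ Icc (0:ℝ) 1, 0 ≤ P s := by
    intro s hs
    rw [hPdef]
    apply pow_nonneg
    nlinarith [hs.1, hs.2, hs₀.1, hs₀.2]
  have hPle1 : ∀ s ∈ Icc (0:ℝ) 1, P s ≤ 1 := by
    intro s hs
    rw [hPdef]
    apply pow_le_one₀ (by nlinarith [hs.1, hs.2, hs₀.1, hs₀.2]) (by nlinarith)
  have hPfar : ∀ s : ℝ, η ≤ |s - s₀| → |s - s₀| ≤ 1 → P s ≤ a₀ ^ N := by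
    intro s h1 h2
    rw [hPdef, ha₀def]
    apply pow_le_pow_left₀ (by nlinarith [abs_nonneg (s - s₀), sq_abs (s - s₀)])
    nlinarith [sq_abs (s - s₀), abs_nonneg (s - s₀)]
  have hPnear : ∀ s : ℝ, |s - s₀| ≤ η / 2 → b₀ ^ N ≤ P s := by
    intro s h1
    rw [hPdef, hb₀def]
    apply pow_le_pow_left₀ (by nlinarith)
    nlinarith [sq_abs (s - s₀), abs_nonneg (s - s₀)]
  refine ⟨fun x => ∑ m ∈ Finset.range (p.natDegree + 1),
      (p.coeff m / (c * ∫ u in (0:ℝ)..1, u ^ m * (1 - u ^ 2) ^ α)) * x ^ m, ?_, ?_, ?_⟩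
  · exact (continuous_finset_sum _ fun m _ =>
      continuous_const.mul (continuous_pow m)).continuousOn
  · intro s hs
    calc (0:ℝ) ≤ P s := hPnn s hs
      _ = p.eval s := (hPeval s).symm
      _ = c * ∫ t in (0:ℝ)..1, (∑ m ∈ Finset.range (p.natDegree + 1),
            (p.coeff m / (c * ∫ u in (0:ℝ)..1, u ^ m * (1 - u ^ 2) ^ α)) * (s * t) ^ m) *
            (1 - t ^ 2) ^ α := (key_radon hα hcne p s).symm
      _ = _ := by norm_num
  · have hkey : ∀ s : ℝ, (c * ∫ t in (0:ℝ)..1,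
        (∑ m ∈ Finset.range (p.natDegree + 1),
          (p.coeff m / (c * ∫ u in (0:ℝ)..1, u ^ m * (1 - u ^ 2) ^ α)) * (s * t) ^ m) *
          (1 - t ^ 2) ^ α) = P s := fun s => (key_radon hα hcne p s).trans (hPeval s)
    have hgoal : (∫ s in (0:ℝ)..1, g s * (c * ∫ t in (0:ℝ)..1,
        (∑ m ∈ Finset.range (p.natDegree + 1),
          (p.coeff m / (c * ∫ u in (0:ℝ)..1, u ^ m * (1 - u ^ 2) ^ α)) * ((s * t)) ^ m) *
          (1 - t ^ 2) ^ α) * (1 - s ^ 2) ^ β * s ^ κ)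
        = ∫ s in (0:ℝ)..1, G s * P s := by
      apply intervalIntegral.integral_congr
      intro s _
      simp only []
      rw [hkey s]
      simp only [hGdef]
      ring
    rw [show (fun s => g s * (c * ∫ t in (0:ℝ)..1,
        (fun x => ∑ m ∈ Finset.range (p.natDegree + 1),
          (p.coeff m / (c * ∫ u in (0:ℝ)..1, u ^ m * (1 - u ^ 2) ^ α)) * x ^ m) (s * t) *
          (1 - t ^ 2) ^ α) * (1 - s ^ 2) ^ β * s ^ κ)
      = fun s => g s * (c * ∫ t in (0:ℝ)..1,
        (∑ m ∈ Finset.range (p.natDegree + 1),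
          (p.coeff m / (c * ∫ u in (0:ℝ)..1, u ^ m * (1 - u ^ 2) ^ α)) * ((s * t)) ^ m) *
          (1 - t ^ 2) ^ α) * (1 - s ^ 2) ^ β * s ^ κ from rfl, hgoal]
    -- now estimate ∫ G * P
    set F : ℝ → ℝ := fun s => G s * P s with hFdef
    have hFc : ContinuousOn F (Icc 0 1) := hGc.mul hPcont.continuousOn
    have hFint : ∀ a b : ℝ, a ∈ Icc (0:ℝ) 1 → b ∈ Icc (0:ℝ) 1 →
        IntervalIntegrable F volume a b :=
      fun a b ha hb => (hFc.mono (uIcc_subset_Icc ha hb)).intervalIntegrable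
    have hp1 : s₀ - η ∈ Ioo (0:ℝ) 1 :=
      (hball (s₀ - η) (by rw [show s₀ - η - s₀ = -η by ring, abs_neg,
        abs_of_nonneg hη0.le])).2
    have hq1 : s₀ + η ∈ Ioo (0:ℝ) 1 :=
      (hball (s₀ + η) (by rw [show s₀ + η - s₀ = η by ring, abs_of_nonneg hη0.le])).2
    have hp1I : s₀ - η ∈ Icc (0:ℝ) 1 := ⟨hp1.1.le, hp1.2.le⟩
    have hq1I : s₀ + η ∈ Icc (0:ℝ) 1 := ⟨hq1.1.le, hq1.2.le⟩
    have h0I : (0:ℝ) ∈ Icc (0:ℝ) 1 := ⟨le_refl _, zero_le_one⟩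
    have h1I : (1:ℝ) ∈ Icc (0:ℝ) 1 := ⟨zero_le_one, le_refl _⟩
    have key1 : (∫ s in (0:ℝ)..(s₀ - η), F s) ≤ M * a₀ ^ N := by
      have hmono : (∫ s in (0:ℝ)..(s₀ - η), F s) ≤ ∫ _ in (0:ℝ)..(s₀ - η), M * a₀ ^ N := by
        apply intervalIntegral.integral_mono_on hp1.1.le (hFint 0 _ h0I hp1I)
          intervalIntegrable_const
        intro s hs
        have hsI : s ∈ Icc (0:ℝ) 1 := ⟨hs.1, le_trans hs.2 hp1.2.le⟩
        have hfar : η ≤ |s - s₀| := by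
          rw [abs_sub_comm, abs_of_nonneg (by linarith [hs.2, hη0])]
          linarith [hs.2]
        have habs1 : |s - s₀| ≤ 1 := by
          rw [abs_le]
          constructor <;> [linarith [hsI.1, hs₀.2]; linarith [hsI.2, hs₀.1]]
        calc F s = G s * P s := rfl
          _ ≤ M * P s := mul_le_mul_of_nonneg_right
              (le_trans (le_abs_self _) (hMabs s hsI)) (hPnn s hsI)
          _ ≤ M * a₀ ^ N := mul_le_mul_of_nonneg_left (hPfar s hfar habs1) hM0
      have hconst : (∫ _ in (0:ℝ)..(s₀ - η), M * a₀ ^ N) = (s₀ - η) * (M * a₀ ^ N) := by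
        rw [intervalIntegral.integral_const]; simp
      rw [hconst] at hmono
      have : (s₀ - η) * (M * a₀ ^ N) ≤ 1 * (M * a₀ ^ N) :=
        mul_le_mul_of_nonneg_right (by linarith [hp1.2]) (by positivity)
      linarith
    have key3 : (∫ s in (s₀ + η)..1, F s) ≤ M * a₀ ^ N := by
      have hmono : (∫ s in (s₀ + η)..1, F s) ≤ ∫ _ in (s₀ + η)..(1:ℝ), M * a₀ ^ N := by
        apply intervalIntegral.integral_mono_on hq1.2.le (hFint _ 1 hq1I h1I)
          intervalIntegrable_const
        intro s hs
        have hsI : s ∈ Icc (0:ℝ) 1 := ⟨le_trans hq1.1.le hs.1, hs.2⟩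
        have hfar : η ≤ |s - s₀| := by
          rw [abs_of_nonneg (by linarith [hs.1, hη0])]
          linarith [hs.1]
        have habs1 : |s - s₀| ≤ 1 := by
          rw [abs_le]
          constructor <;> [linarith [hsI.1, hs₀.2]; linarith [hsI.2, hs₀.1]]
        calc F s = G s * P s := rfl
          _ ≤ M * P s := mul_le_mul_of_nonneg_right
              (le_trans (le_abs_self _) (hMabs s hsI)) (hPnn s hsI)
          _ ≤ M * a₀ ^ N := mul_le_mul_of_nonneg_left (hPfar s hfar habs1) hM0
      have hconst : (∫ _ in (s₀ + η)..(1:ℝ), M * a₀ ^ N) = (1 - (s₀ + η)) * (M * a₀ ^ N) := by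
        rw [intervalIntegral.integral_const]; simp
      rw [hconst] at hmono
      have : (1 - (s₀ + η)) * (M * a₀ ^ N) ≤ 1 * (M * a₀ ^ N) :=
        mul_le_mul_of_nonneg_right (by linarith [hq1.1]) (by positivity)
      linarith
    have hPint : ∀ a b : ℝ, IntervalIntegrable P volume a b :=
      fun a b => hPcont.intervalIntegrable a b
    have key2 : (∫ s in (s₀ - η)..(s₀ + η), F s) ≤ (G s₀ / 2) * (η * b₀ ^ N) := by
      have hmono : (∫ s in (s₀ - η)..(s₀ + η), F s)
          ≤ ∫ s in (s₀ - η)..(s₀ + η), (G s₀ / 2) * P s := by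
        apply intervalIntegral.integral_mono_on (by linarith)
          (hFint _ _ hp1I hq1I) ((continuous_const.mul hPcont).intervalIntegrable _ _)
        intro s hs
        have hnear : |s - s₀| ≤ η := by
          rw [abs_le]; exact ⟨by linarith [hs.1], by linarith [hs.2]⟩
        obtain ⟨hGs, hsIoo⟩ := hball s hnear
        have hsI : s ∈ Icc (0:ℝ) 1 := ⟨hsIoo.1.le, hsIoo.2.le⟩
        calc F s = G s * P s := rfl
          _ ≤ (G s₀ / 2) * P s := mul_le_mul_of_nonneg_right hGs.le (hPnn s hsI)
      rw [intervalIntegral.integral_const_mul] at hmono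
      have hPlow : η * b₀ ^ N ≤ ∫ s in (s₀ - η)..(s₀ + η), P s := by
        rw [← intervalIntegral.integral_add_adjacent_intervals
            (hPint (s₀ - η) (s₀ - η/2)) (hPint (s₀ - η/2) (s₀ + η)),
          ← intervalIntegral.integral_add_adjacent_intervals
            (hPint (s₀ - η/2) (s₀ + η/2)) (hPint (s₀ + η/2) (s₀ + η))]
        have hnn1 : (0:ℝ) ≤ ∫ s in (s₀ - η)..(s₀ - η/2), P s := by
          apply intervalIntegral.integral_nonneg (by linarith)
          intro x hx
          exact hPnn x ⟨by linarith [hx.1, hp1.1], by linarith [hx.2, hq1.2, hη0]⟩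
        have hnn2 : (0:ℝ) ≤ ∫ s in (s₀ + η/2)..(s₀ + η), P s := by
          apply intervalIntegral.integral_nonneg (by linarith)
          intro x hx
          exact hPnn x ⟨by linarith [hx.1, hp1.1, hη0], by linarith [hx.2, hq1.2]⟩
        have hmid : η * b₀ ^ N ≤ ∫ s in (s₀ - η/2)..(s₀ + η/2), P s := by
          have : (∫ _ in (s₀ - η/2)..(s₀ + η/2), b₀ ^ N)
              ≤ ∫ s in (s₀ - η/2)..(s₀ + η/2), P s := by
            apply intervalIntegral.integral_mono_on (by linarith)
              intervalIntegrable_const (hPint _ _)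
            intro s hs
            apply hPnear
            rw [abs_le]; exact ⟨by linarith [hs.1], by linarith [hs.2]⟩
          have hconst : (∫ _ in (s₀ - η/2)..(s₀ + η/2), b₀ ^ N)
              = η * b₀ ^ N := by
            rw [intervalIntegral.integral_const]
            rw [show s₀ + η/2 - (s₀ - η/2) = η by ring]
            simp
          linarith [hconst ▸ this]
        linarith
      calc (∫ s in (s₀ - η)..(s₀ + η), F s)
          ≤ (G s₀ / 2) * ∫ s in (s₀ - η)..(s₀ + η), P s := hmono
        _ ≤ (G s₀ / 2) * (η * b₀ ^ N) :=
            mul_le_mul_of_nonpos_left hPlow (by linarith)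
    -- assemble
    rw [← intervalIntegral.integral_add_adjacent_intervals (hFint 0 (s₀ - η) h0I hp1I)
        (hFint (s₀ - η) 1 hp1I h1I),
      ← intervalIntegral.integral_add_adjacent_intervals (hFint (s₀ - η) (s₀ + η) hp1I hq1I)
        (hFint (s₀ + η) 1 hq1I h1I)]
    have hra : a₀ ^ N = (a₀ / b₀) ^ N * b₀ ^ N := by
      rw [div_pow, div_mul_cancel₀]
      exact ne_of_gt (pow_pos hb₀0 N)
    have hN' : (a₀ / b₀) ^ N * (2 * M + 1) < ε * η :=
      (lt_div_iff₀ (by positivity)).1 hN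
    have hrN : (0:ℝ) ≤ (a₀ / b₀) ^ N := pow_nonneg (div_nonneg ha₀0.le hb₀0.le) N
    have h1 : 2 * M * (a₀ / b₀) ^ N < ε * η := by nlinarith
    have h2 : 2 * M * a₀ ^ N < ε * η * b₀ ^ N := by
      have := mul_lt_mul_of_pos_right h1 (pow_pos hb₀0 N)
      nlinarith [this, hra]
    have hGε : G s₀ / 2 = -ε := by rw [hεdef]; ring
    rw [hGε] at key2
    nlinarith [key1, key2, key3, h2]
end

section
/- Let n ≥ 4 and 2 ≤ k ≤ n−2. Let T_t(s) = √(1−s²(1−t²)) and let μ be the probability measure on [0,1] with density e(1−s²)^((n−k−3)/2) s^{k−1} ds. Suppose g̃ : [0,1] → ℝ is continuous with g̃ ≥ −1 everywhere and g̃(s) = γ* := (1+γ)/(1−γ) for s outside an interval J ⊂ (0,1), where γ ∈ (0,1) satisfies μ(T_t^{−1}(J)) ≤ γ for all t ∈ [0,1]. Then ∫₀¹ g̃(T_t(s)) dμ(s) ≥ γ*(1−γ) − γ = 1 for every t ∈ [0,1]. -/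
open MeasureTheory Set

/-! Off the pullback `S = T_t⁻¹(J)` the integrand `g ∘ T_t` equals `γ*` and on `S` it is at
least `-1`, so pointwise `g ∘ T_t ≥ γ* - (γ* + 1) 𝟙_S`. Integrating against the probability
measure `μ`, for which `μ(S) ≤ γ`, gives `∫ g ∘ T_t dμ ≥ γ* - (γ* + 1) γ = 1`. -/

section BadSet

variable {α : Type*} [MeasurableSpace α] {μ : Measure α}

theorem le_integral_mul_of_eq_off {f w : α → ℝ} {S : Set α} {c γ : ℝ} (hc : -1 ≤ c)
    (hS : MeasurableSet S) (hw : Integrable w μ) (hw0 : 0 ≤ᵐ[μ] w) (hw1 : ∫ x, w x ∂μ = 1)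
    (hfw : Integrable (fun x => f x * w x) μ) (hf : ∀ᵐ x ∂μ, -1 ≤ f x)
    (hfS : ∀ᵐ x ∂μ, x ∉ S → f x = c)
    (hSγ : ∫ x, S.indicator (fun _ => (1 : ℝ)) x * w x ∂μ ≤ γ) :
    c - (c + 1) * γ ≤ ∫ x, f x * w x ∂μ := by
  have hSw : Integrable (fun x => S.indicator (fun _ => (1 : ℝ)) x * w x) μ := by
    simpa only [← indicator_mul_left, one_mul] using hw.indicator hS
  have hpt : ∀ᵐ x ∂μ,
      c * w x - (c + 1) * (S.indicator (fun _ => (1 : ℝ)) x * w x) ≤ f x * w x := by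
    filter_upwards [hw0, hf, hfS] with x (hwx : 0 ≤ w x) hfx hfSx
    by_cases hx : x ∈ S
    · rw [indicator_of_mem hx]
      nlinarith
    · simp [indicator_of_notMem hx, hfSx hx]
  calc c - (c + 1) * γ
      ≤ c - (c + 1) * ∫ x, S.indicator (fun _ => (1 : ℝ)) x * w x ∂μ := by
        gcongr
        linarith
    _ = ∫ x, c * w x - (c + 1) * (S.indicator (fun _ => (1 : ℝ)) x * w x) ∂μ := by
        rw [integral_sub (hw.const_mul c) (hSw.const_mul (c + 1)), integral_const_mul,
          integral_const_mul, hw1, mul_one]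
    _ ≤ ∫ x, f x * w x ∂μ :=
        integral_mono_ae ((hw.const_mul c).sub (hSw.const_mul (c + 1))) hfw hpt

end BadSet

theorem le_intervalIntegral_mul_of_eq_off {a b : ℝ} (hab : a ≤ b) {f w : ℝ → ℝ} {S : Set ℝ}
    {c γ : ℝ} (hc : -1 ≤ c) (hS : MeasurableSet S) (hw : IntervalIntegrable w volume a b)
    (hw0 : ∀ x ∈ Icc a b, 0 ≤ w x) (hw1 : ∫ x in a..b, w x = 1)
    (hfw : IntervalIntegrable (fun x => f x * w x) volume a b)
    (hf : ∀ x ∈ Icc a b, -1 ≤ f x) (hfS : ∀ x ∈ Icc a b, x ∉ S → f x = c)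
    (hSγ : ∫ x in a..b, S.indicator (fun _ => (1 : ℝ)) x * w x ≤ γ) :
    c - (c + 1) * γ ≤ ∫ x in a..b, f x * w x := by
  rw [intervalIntegral.integral_of_le hab] at hw1 hSγ ⊢
  have hIoc : ∀ P : ℝ → Prop, (∀ x ∈ Icc a b, P x) → ∀ᵐ x ∂volume.restrict (Ioc a b), P x :=
    fun _ h => ae_restrict_of_forall_mem measurableSet_Ioc fun x hx =>
      h x (Ioc_subset_Icc_self hx)
  exact le_integral_mul_of_eq_off hc hS hw.1 (hIoc _ hw0) hw1 hfw.1 (hIoc _ hf) (hIoc _ hfS) hSγ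

theorem sqrt_one_sub_sq_mul_mem_Icc {t : ℝ} (ht : t ^ 2 ≤ 1) (s : ℝ) :
    Real.sqrt (1 - s ^ 2 * (1 - t ^ 2)) ∈ Icc (0 : ℝ) 1 :=
  ⟨Real.sqrt_nonneg _, Real.sqrt_le_one.mpr (by nlinarith [sq_nonneg s])⟩

theorem stmt14_general (n k : ℕ)
    (e : ℝ) (hepos : 0 < e)
    (he : e * ∫ s in (0:ℝ)..1,
        (1 - s ^ 2) ^ (((n : ℝ) - (k : ℝ) - 3) / 2) * s ^ ((k : ℝ) - 1) = 1)
    (a b : ℝ)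
    (γ : ℝ) (hγ : γ ∈ Ioo (0:ℝ) 1)
    (g : ℝ → ℝ) (hgcont : ContinuousOn g (Icc 0 1))
    (hgeneg : ∀ s ∈ Icc (0:ℝ) 1, -1 ≤ g s)
    (hgout : ∀ s ∈ Icc (0:ℝ) 1, s ∉ Icc a b → g s = (1 + γ) / (1 - γ))
    (hpull : ∀ t ∈ Icc (0:ℝ) 1,
      (∫ s in (0:ℝ)..1,
          (Icc a b).indicator (fun _ => (1:ℝ)) (Real.sqrt (1 - s ^ 2 * (1 - t ^ 2))) *
            (e * ((1 - s ^ 2) ^ (((n : ℝ) - (k : ℝ) - 3) / 2) * s ^ ((k : ℝ) - 1))))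
        ≤ γ) :
    ∀ t ∈ Icc (0:ℝ) 1,
      ((1 + γ) / (1 - γ)) * (1 - γ) - γ = 1 ∧
      1 ≤ ∫ s in (0:ℝ)..1,
        g (Real.sqrt (1 - s ^ 2 * (1 - t ^ 2))) *
          (e * ((1 - s ^ 2) ^ (((n : ℝ) - (k : ℝ) - 3) / 2) * s ^ ((k : ℝ) - 1))) := by
  intro t ht
  have hγ1 : 0 < 1 - γ := sub_pos.mpr hγ.2
  have hγs : 0 ≤ (1 + γ) / (1 - γ) := div_nonneg (by linarith [hγ.1]) hγ1.le
  have hT : ∀ s, Real.sqrt (1 - s ^ 2 * (1 - t ^ 2)) ∈ Icc (0 : ℝ) 1 :=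
    sqrt_one_sub_sq_mul_mem_Icc (by nlinarith [ht.1, ht.2])
  have hTc : Continuous fun s : ℝ => Real.sqrt (1 - s ^ 2 * (1 - t ^ 2)) := by fun_prop
  -- the density is integrable because its integral is nonzero
  have hw : IntervalIntegrable
      (fun s : ℝ => e * ((1 - s ^ 2) ^ (((n : ℝ) - k - 3) / 2) * s ^ ((k : ℝ) - 1))) volume 0 1 :=
    (intervalIntegral.intervalIntegrable_of_integral_ne_zero
      (right_ne_zero_of_mul_eq_one he)).const_mul e
  have hw0 : ∀ s ∈ Icc (0 : ℝ) 1,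
      0 ≤ e * ((1 - s ^ 2) ^ (((n : ℝ) - k - 3) / 2) * s ^ ((k : ℝ) - 1)) := fun s hs =>
    mul_nonneg hepos.le (mul_nonneg (Real.rpow_nonneg (by nlinarith [hs.1, hs.2]) _)
      (Real.rpow_nonneg hs.1 _))
  refine ⟨by field_simp; ring, ?_⟩
  calc (1 : ℝ) = (1 + γ) / (1 - γ) - ((1 + γ) / (1 - γ) + 1) * γ := by field_simp; ring
    _ ≤ _ := le_intervalIntegral_mul_of_eq_off zero_le_one (by linarith)
        (hTc.measurable measurableSet_Icc) hw hw0
        (by rw [intervalIntegral.integral_const_mul]; exact he)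
        (hw.continuousOn_mul (hgcont.comp hTc.continuousOn fun s _ => hT s))
        (fun s _ => hgeneg _ (hT s)) (fun s _ => hgout _ (hT s)) (hpull t ht)

/-- the key lower-bound estimate: if `g̃ ≥ -1` everywhere on `[0,1]`,
`g̃ = γ* = (1+γ)/(1-γ)` off the 'bad' interval `J ⊂ (0,1)`, and the `μ`-measure of the
pullback `T_t⁻¹(J)` is at most `γ` for every `t ∈ [0,1]`, where `T_t(s) = √(1-s²(1-t²))`
and `μ` is the probability measure with density `e(1-s²)^((n-k-3)/2) s^(k-1)` on `[0,1]`,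
then `∫₀¹ g̃(T_t(s)) dμ(s) ≥ γ*(1-γ) - γ = 1` for every `t ∈ [0,1]`. -/
theorem stmt14 (n k : ℕ) (hn : 4 ≤ n) (hk2 : 2 ≤ k) (hk : k ≤ n - 2)
    (e : ℝ) (hepos : 0 < e)
    (he : e * ∫ s in (0:ℝ)..1,
        (1 - s ^ 2) ^ (((n : ℝ) - (k : ℝ) - 3) / 2) * s ^ ((k : ℝ) - 1) = 1)
    (a b : ℝ) (hJ : Icc a b ⊆ Ioo (0:ℝ) 1)
    (γ : ℝ) (hγ : γ ∈ Ioo (0:ℝ) 1)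
    (g : ℝ → ℝ) (hgcont : ContinuousOn g (Icc 0 1))
    (hgeneg : ∀ s ∈ Icc (0:ℝ) 1, -1 ≤ g s)
    (hgout : ∀ s ∈ Icc (0:ℝ) 1, s ∉ Icc a b → g s = (1 + γ) / (1 - γ))
    (hpull : ∀ t ∈ Icc (0:ℝ) 1,
      (∫ s in (0:ℝ)..1,
          (Icc a b).indicator (fun _ => (1:ℝ)) (Real.sqrt (1 - s ^ 2 * (1 - t ^ 2))) *
            (e * ((1 - s ^ 2) ^ (((n : ℝ) - (k : ℝ) - 3) / 2) * s ^ ((k : ℝ) - 1))))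
        ≤ γ) :
    ∀ t ∈ Icc (0:ℝ) 1,
      ((1 + γ) / (1 - γ)) * (1 - γ) - γ = 1 ∧
      1 ≤ ∫ s in (0:ℝ)..1,
        g (Real.sqrt (1 - s ^ 2 * (1 - t ^ 2))) *
          (e * ((1 - s ^ 2) ^ (((n : ℝ) - (k : ℝ) - 3) / 2) * s ^ ((k : ℝ) - 1))) :=
  stmt14_general n k e hepos he a b γ hγ g hgcont hgeneg hgout hpull
end
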